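/- Let τ_a < τ_b < τ_c be integers, let x : ℤ → ℝ^M be a flow, and let μ_1, μ_2 ∈ ℝ^M be such that (τ_b, μ_1, μ_2) is the unique minimizer of F(τ_a+1, τ̃_b, x, μ̃_1) + F(τ̃_b+1, τ_c, x, μ̃_2) over integers τ̃_b with τ_a ≤ τ̃_b ≤ τ_c and vectors μ̃_1, μ̃_2 ∈ ℝ^M. Fix an integer t with τ_a ≤ t ≤ τ_b, and suppose the minimization of F(t+1, τ̃_b, x, μ_1) + F(τ̃_b+1, τ_c, x, μ̃_2) over integers τ̃_b with t ≤ τ̃_b ≤ τ_c and vectors μ̃_2 ∈ ℝ^M also has a unique minimizer. Then that unique minimizer is (τ_b, μ_2). -/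
import Mathlib

/-- The asymmetric quadratic penalty: `φ(a,b) = C(a−b)² if a > b, else (a−b)²`. -/
noncomputable def phi (C a b : ℝ) : ℝ := if a > b then C * (a - b) ^ 2 else (a - b) ^ 2

/-- `Φ(v,μ) = Σ_{m} φ(v_m, μ_m)`. -/
noncomputable def Phi (M : ℕ) (C : ℝ) (v μ : Fin M → ℝ) : ℝ :=
  ∑ m : Fin M, phi C (v m) (μ m)

/-- The fit `F(t_a, t_b, x, μ) = Σ_{t=t_a}^{t_b} Φ(x(t), μ)`, equal to `0` when `t_b < t_a`. -/
noncomputable def fit (M : ℕ) (C : ℝ) (ta tb : ℤ) (x : ℤ → Fin M → ℝ) (μ : Fin M → ℝ) : ℝ :=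
  ∑ t ∈ Finset.Icc ta tb, Phi M C (x t) μ

lemma fit_split (M : ℕ) (C : ℝ) (a b c : ℤ) (hab : a ≤ b) (hbc : b ≤ c)
    (x : ℤ → Fin M → ℝ) (μ : Fin M → ℝ) :
    fit M C (a + 1) c x μ = fit M C (a + 1) b x μ + fit M C (b + 1) c x μ := by
  unfold fit
  have h1 : ∀ p q : ℤ, Finset.Icc (p + 1) q = Finset.Ioc p q := by
    intro p q; ext z; simp [Int.add_one_le_iff]
  rw [h1, h1, h1, ← Finset.sum_union, Finset.Ioc_union_Ioc_eq_Ioc hab hbc]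
  rw [Finset.disjoint_left]
  intro z hz hz'
  simp only [Finset.mem_Ioc] at hz hz'
  omega

theorem stmt_1 (M : ℕ) (hM : 1 ≤ M) (C : ℝ) (hC : 1 ≤ C)
    (τa τb τc : ℤ) (hab : τa < τb) (hbc : τb < τc)
    (x : ℤ → Fin M → ℝ) (μ1 μ2 : Fin M → ℝ)
    -- `(τb, μ1, μ2)` is the unique minimizer of the two-period segmentation problem:
    -- every other feasible triple has strictly larger cost.
    (hopt : ∀ τb' : ℤ, τa ≤ τb' → τb' ≤ τc → ∀ μ1' μ2' : Fin M → ℝ,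
      (τb', μ1', μ2') ≠ (τb, μ1, μ2) →
      fit M C (τa + 1) τb x μ1 + fit M C (τb + 1) τc x μ2 <
        fit M C (τa + 1) τb' x μ1' + fit M C (τb' + 1) τc x μ2')
    (t : ℤ) (hta : τa ≤ t) (htb : t ≤ τb)
    (τb' : ℤ) (μ2' : Fin M → ℝ) (htb' : t ≤ τb') (hbc' : τb' ≤ τc)
    -- `(τb', μ2')` is the unique minimizer of the re-evaluated problem with the
    -- first-period parameter frozen at `μ1`.
    (hopt2 : ∀ σ : ℤ, t ≤ σ → σ ≤ τc → ∀ ν : Fin M → ℝ, (σ, ν) ≠ (τb', μ2') →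
      fit M C (t + 1) τb' x μ1 + fit M C (τb' + 1) τc x μ2' <
        fit M C (t + 1) σ x μ1 + fit M C (σ + 1) τc x ν) :
    τb' = τb ∧ μ2' = μ2 := by
  by_contra hne
  have hne' : (τb, μ2) ≠ (τb', μ2') := by
    intro h; apply hne
    have := Prod.mk.injEq τb μ2 τb' μ2' ▸ h
    exact ⟨(Prod.mk.inj h).1.symm, (Prod.mk.inj h).2.symm⟩
  have h2 := hopt2 τb htb hbc.le μ2 hne'
  have hne'' : (τb', μ1, μ2') ≠ (τb, μ1, μ2) := by
    intro h
    apply hne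
    obtain ⟨h1, h2⟩ := Prod.mk.inj h
    exact ⟨h1, (Prod.mk.inj h2).2⟩
  have h1 := hopt τb' (hta.trans htb') hbc' μ1 μ2' hne''
  have e1 := fit_split M C τa t τb hta htb x μ1
  have e2 := fit_split M C τa t τb' hta htb' x μ1
  rw [e1, e2] at h1
  linarith
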